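/- Under ∂^s(P) = ∂^w(P), for any (x,y) ∈ T the extended max Russell graph measure satisfies F̂(x,y;T) = max{ (m+s−1+θ*)/(m+s), (m+s−1+1/φ*)/(m+s) }, where φ* = min over r with y_r > 0 of max{φ_r : (x, φ⊗y) ∈ T, φ_q = 1 for all q ≠ r}, and θ* = max over i with x_i > 0 of min{θ_i : (θ⊗x, y) ∈ T, θ_q = 1 for all q ≠ i} (with θ* = 1/φ* if x = 0). -/

import Mathlib

noncomputable section

open Finset

/-- A point in input-output space: `m` inputs and `s` outputs. -/
abbrev Pt (m s : ℕ) := (Fin m → ℝ) × (Fin s → ℝ)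

/-- Standard inner product. -/
def dot {n : ℕ} (v x : Fin n → ℝ) : ℝ := ∑ i, v i * x i

/-- Strongly efficient frontier: non-dominated points of `T`. -/
def strongF {m s : ℕ} (T : Set (Pt m s)) : Set (Pt m s) :=
  {p | p ∈ T ∧ ∀ q : Pt m s,
    (∀ i, q.1 i ≤ p.1 i) → (∀ r, p.2 r ≤ q.2 r) → q ≠ p → q ∉ T}

/-- Weakly efficient frontier of `T`. -/
def weakF {m s : ℕ} (T : Set (Pt m s)) : Set (Pt m s) :=
  {p | p ∈ T ∧ ∀ q : Pt m s,
    (∀ i, q.1 i < p.1 i) → (∀ r, p.2 r < q.2 r) → q ∉ T}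

/-- The polyhedron `P = {(x,y) : vˡ·x − uˡ·y − σˡ ≥ 0, l = 1,…,L}`. -/
def polyP {m s L : ℕ} (v : Fin L → Fin m → ℝ) (u : Fin L → Fin s → ℝ)
    (σ : Fin L → ℝ) : Set (Pt m s) :=
  {p | ∀ l, 0 ≤ dot (v l) p.1 - dot (u l) p.2 - σ l}

/-- `T = P ∩ (ℝ^m_+ × (ℝ^s_+ \ {0}))`. -/
def TSet {m s L : ℕ} (v : Fin L → Fin m → ℝ) (u : Fin L → Fin s → ℝ)
    (σ : Fin L → ℝ) : Set (Pt m s) :=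
  {p | p ∈ polyP v u σ ∧ (∀ i, 0 ≤ p.1 i) ∧ (∀ r, 0 ≤ p.2 r) ∧ p.2 ≠ 0}

open scoped Classical

/-- `φ* = min over r with y_r > 0 of max{φ_r : (x, φ⊗y) ∈ T, φ_q = 1 (q ≠ r)}`. -/
def phiStar {m s L : ℕ} (v : Fin L → Fin m → ℝ) (u : Fin L → Fin s → ℝ)
    (σ : Fin L → ℝ) (x : Fin m → ℝ) (y : Fin s → ℝ) : ℝ :=
  sInf ((fun r => sSup {c : ℝ |
      (x, Function.update y r (c * y r)) ∈ TSet v u σ}) '' {r | 0 < y r})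

/-- `θ* = max over i with x_i > 0 of min{θ_i : (θ⊗x, y) ∈ T, θ_q = 1 (q ≠ i)}`,
with `θ* = 1/φ*` when `x = 0`. -/
def thetaStar {m s L : ℕ} (v : Fin L → Fin m → ℝ) (u : Fin L → Fin s → ℝ)
    (σ : Fin L → ℝ) (x : Fin m → ℝ) (y : Fin s → ℝ) : ℝ :=
  if ∀ i, x i = 0 then 1 / phiStar v u σ x y
  else sSup ((fun i => sInf {c : ℝ |
      (Function.update x i (c * x i), y) ∈ TSet v u σ}) '' {i | 0 < x i})

/-! Since every facet normal of `P` is strictly positive, a point of `T` is strongly efficient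
exactly when one of its constraints is tight. Each one-dimensional problem defining `φ*` or `θ*`
is solved by making tight the constraint of least relative slack, so the two candidate values are
attained on the frontier (except when `θ* = 0`, where the `φ*` candidate is larger). Conversely,
at a frontier point `(θ⊗x, φ⊗y)` some constraint `l` is tight: `Σ vˡᵢxᵢ(1 - θᵢ) + Σ uˡᵣyᵣ(φᵣ - 1)`
equals the slack `S` of `l` at `(x, y)`, while optimality of `θ*` and `φ*` bounds the coefficients
by `vˡᵢxᵢ(1 - θ*) ≤ S` and `uˡᵣyᵣ(φ* - 1) ≤ S`. Comparing term by term forces the total deficit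
`Σ(1 - θᵢ) + Σ(1 - 1/φᵣ)` to be at least `1 - max θ* (1/φ*)`. -/

open Function Filter Topology

lemma dot_update {n : ℕ} (w z : Fin n → ℝ) (j : Fin n) (t : ℝ) :
    dot w (update z j t) = dot w z + w j * (t - z j) := by
  have : update z j t = z + Pi.single j (t - z j) := by
    ext i
    rcases eq_or_ne i j with rfl | h <;> simp [*]
  simp [dot, this, mul_add, Finset.sum_add_distrib, Pi.single_apply]

lemma dot_lt_dot {n : ℕ} {w z z' : Fin n → ℝ} (hw : ∀ i, 0 < w i) (h : z ≤ z') (hne : z ≠ z') :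
    dot w z < dot w z' := by
  obtain ⟨j, hj⟩ := ne_iff.mp hne
  exact Finset.sum_lt_sum (fun i _ => mul_le_mul_of_nonneg_left (h i) (hw i).le)
    ⟨j, Finset.mem_univ j, mul_lt_mul_of_pos_left ((h j).lt_of_ne hj) (hw j)⟩

lemma dot_le_dot {n : ℕ} {w z z' : Fin n → ℝ} (hw : ∀ i, 0 ≤ w i) (h : z ≤ z') :
    dot w z ≤ dot w z' :=
  Finset.sum_le_sum fun i _ => mul_le_mul_of_nonneg_left (h i) (hw i)

lemma exists_forall_mul_le_iff {ι : Type*} [Finite ι] [Nonempty ι] {w b : ι → ℝ}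
    (hw : ∀ l, 0 < w l) :
    ∃ t, (∀ c, (∀ l, c * w l ≤ b l) ↔ c ≤ t) ∧ ∃ l, t * w l = b l := by
  obtain ⟨l₀, hl₀⟩ := Finite.exists_min fun l => b l / w l
  refine ⟨b l₀ / w l₀, fun c => ⟨fun h => (le_div_iff₀ (hw l₀)).2 (h l₀), fun h l => ?_⟩,
    l₀, div_mul_cancel₀ _ (hw l₀).ne'⟩
  exact (le_div_iff₀ (hw l)).1 (h.trans (hl₀ l))

lemma sum_update_one {n : ℕ} (g : ℝ → ℝ) (j : Fin n) (c : ℝ) :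
    ∑ i, g (update (1 : Fin n → ℝ) j c i) = g c + (n - 1) * g 1 := by
  have hcompl : ∀ i ∈ ({j}ᶜ : Finset (Fin n)), g (update (1 : Fin n → ℝ) j c i) = g 1 :=
    fun i hi => by
      rw [update_of_ne (Finset.mem_compl.1 hi ∘ Finset.mem_singleton.2), Pi.one_apply]
  rw [Fintype.sum_eq_add_sum_compl j, update_self, Finset.sum_congr rfl hcompl]
  simp [Finset.card_compl, Nat.cast_sub j.pos]

lemma update_one_mul {n : ℕ} (f : Fin n → ℝ) (j : Fin n) (c : ℝ) :
    (fun i => update (1 : Fin n → ℝ) j c i * f i) = update f j (c * f j) := by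
  ext i
  rcases eq_or_ne i j with rfl | h <;> simp [*]

/-- If the deficits summed to less than `1 - M`, every `φ r` would stay below `1 / M`, so each
term of `hS` would be at most `S / (1 - M)` times its deficit, giving `S < S`. -/
lemma one_sub_le_sum_one_sub {ι κ : Type*} [Fintype ι] [Fintype κ] {a θ : ι → ℝ}
    {b φ : κ → ℝ} {S M : ℝ} (hb₀ : ∃ r, 0 < b r)
    (hθ : ∀ i, θ i ≤ 1) (hφ : ∀ r, 1 ≤ φ r) (hM : 0 < M)
    (hS : ∑ i, a i * (1 - θ i) + ∑ r, b r * (φ r - 1) = S)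
    (haS : ∀ i, a i * (1 - M) ≤ S) (hbS : ∀ r, b r * (1 - M) ≤ M * S) :
    1 - M ≤ ∑ i, (1 - θ i) + ∑ r, (1 - 1 / φ r) := by
  by_contra! h
  have hα : ∀ i, 0 ≤ 1 - θ i := fun i => sub_nonneg.2 (hθ i)
  have hβ : ∀ r, 0 ≤ 1 - 1 / φ r := fun r =>
    sub_nonneg.2 (div_le_one_of_le₀ (hφ r) (zero_le_one.trans (hφ r)))
  have hα_sum := Finset.sum_nonneg fun i (_ : i ∈ Finset.univ) => hα i
  have hβ_sum := Finset.sum_nonneg fun r (_ : r ∈ Finset.univ) => hβ r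
  have hM₁ : 0 < 1 - M := by linarith
  have hS₀ : 0 < S := by
    obtain ⟨r, hr⟩ := hb₀
    by_contra! hS
    nlinarith [hbS r, mul_pos hr hM₁]
  have hai : ∀ i, a i * (1 - θ i) ≤ S / (1 - M) * (1 - θ i) := fun i =>
    mul_le_mul_of_nonneg_right ((le_div_iff₀ hM₁).2 (haS i)) (hα i)
  have hbr : ∀ r, b r * (φ r - 1) ≤ S / (1 - M) * (1 - 1 / φ r) := by
    intro r
    have hφ₀ : 0 < φ r := zero_lt_one.trans_le (hφ r)
    have hβr : 1 - 1 / φ r < 1 - M :=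
      lt_of_le_of_lt (Finset.single_le_sum (fun r _ => hβ r) (Finset.mem_univ r))
        (by linarith)
    have hMφ : M * φ r < 1 := by
      rw [sub_lt_sub_iff_left, lt_div_iff₀ hφ₀] at hβr
      exact hβr
    have hbφ : b r * φ r ≤ S / (1 - M) := by
      rw [le_div_iff₀ hM₁]
      nlinarith [mul_le_mul_of_nonneg_right (hbS r) hφ₀.le]
    calc b r * (φ r - 1) = b r * φ r * (1 - 1 / φ r) := by field_simp
      _ ≤ S / (1 - M) * (1 - 1 / φ r) := mul_le_mul_of_nonneg_right hbφ (hβ r)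
  have := calc S = ∑ i, a i * (1 - θ i) + ∑ r, b r * (φ r - 1) := hS.symm
    _ ≤ ∑ i, S / (1 - M) * (1 - θ i) + ∑ r, S / (1 - M) * (1 - 1 / φ r) :=
      add_le_add (Finset.sum_le_sum fun i _ => hai i) (Finset.sum_le_sum fun r _ => hbr r)
    _ = S / (1 - M) * (∑ i, (1 - θ i) + ∑ r, (1 - 1 / φ r)) := by
      rw [mul_add, Finset.mul_sum, Finset.mul_sum]
    _ < S / (1 - M) * (1 - M) := mul_lt_mul_of_pos_left h (div_pos hS₀ hM₁)
    _ = S := div_mul_cancel₀ _ hM₁.ne'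
  exact lt_irrefl S this

section TechnologySet

variable {m s L : ℕ} {v : Fin L → Fin m → ℝ} {u : Fin L → Fin s → ℝ} {σ : Fin L → ℝ}
  {x : Fin m → ℝ} {y : Fin s → ℝ}

def slack (v : Fin L → Fin m → ℝ) (u : Fin L → Fin s → ℝ) (σ : Fin L → ℝ) (l : Fin L)
    (p : Pt m s) : ℝ :=
  dot (v l) p.1 - dot (u l) p.2 - σ l

lemma slack_nonneg_of_mem_TSet {p : Pt m s} (hp : p ∈ TSet v u σ) (l : Fin L) :
    0 ≤ slack v u σ l p :=
  hp.1 l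

lemma slack_update_fst (l : Fin L) (i : Fin m) (c : ℝ) :
    slack v u σ l (update x i (c * x i), y) = slack v u σ l (x, y) - (1 - c) * (v l i * x i) := by
  simp only [slack, dot_update]; ring

lemma slack_update_snd (l : Fin L) (r : Fin s) (c : ℝ) :
    slack v u σ l (x, update y r (c * y r)) = slack v u σ l (x, y) - (c - 1) * (u l r * y r) := by
  simp only [slack, dot_update]; ring

lemma slack_eq_sum_add_slack (l : Fin L) (θ : Fin m → ℝ) (φ : Fin s → ℝ) :
    slack v u σ l (x, y) = ∑ i, v l i * x i * (1 - θ i) + ∑ r, u l r * y r * (φ r - 1)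
      + slack v u σ l (fun i => θ i * x i, fun r => φ r * y r) := by
  have hθ : ∀ i, v l i * (θ i * x i) = v l i * x i * θ i := fun i => by ring
  have hφ : ∀ r, u l r * (φ r * y r) = u l r * y r * φ r := fun r => by ring
  simp only [slack, dot, hθ, hφ, mul_sub, mul_one, Finset.sum_sub_distrib]
  ring

lemma slack_lt_slack (hv : ∀ l i, 0 < v l i) (hu : ∀ l r, 0 < u l r) {p q : Pt m s}
    (h₁ : q.1 ≤ p.1) (h₂ : p.2 ≤ q.2) (hne : q ≠ p) (l : Fin L) :
    slack v u σ l q < slack v u σ l p := by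
  have hv₁ := dot_le_dot (fun i => (hv l i).le) h₁
  have hu₂ := dot_le_dot (fun r => (hu l r).le) h₂
  unfold slack
  rcases eq_or_ne q.1 p.1 with e | e
  · have := dot_lt_dot (hu l) h₂ fun e' => hne (Prod.ext e e'.symm)
    linarith
  · have := dot_lt_dot (hv l) h₁ e
    linarith

lemma mem_strongF_of_slack_eq_zero (hv : ∀ l i, 0 < v l i) (hu : ∀ l r, 0 < u l r)
    {p : Pt m s} (hp : p ∈ TSet v u σ) {l : Fin L} (hl : slack v u σ l p = 0) :
    p ∈ strongF (TSet v u σ) := by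
  refine ⟨hp, fun q h₁ h₂ hne hq => ?_⟩
  have := slack_lt_slack (σ := σ) hv hu h₁ h₂ hne l
  linarith [slack_nonneg_of_mem_TSet hq l]

/-- Raising one output slightly keeps a point with no tight constraint inside `T`. -/
lemma exists_slack_eq_zero_of_mem_strongF {p : Pt m s} (hp : p ∈ strongF (TSet v u σ)) :
    ∃ l, slack v u σ l p = 0 := by
  by_contra! h
  have hpos : ∀ l, 0 < slack v u σ l p := fun l => (slack_nonneg_of_mem_TSet hp.1 l).lt_of_ne' (h l)
  obtain ⟨r, -⟩ := ne_iff.mp hp.1.2.2.2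
  have hsmall : ∀ᶠ ε in 𝓝[>] (0 : ℝ), ∀ l, ε * u l r < slack v u σ l p := by
    refine Filter.eventually_all.2 fun l => ?_
    have : Filter.Tendsto (fun ε => ε * u l r) (𝓝[>] 0) (𝓝 0) := by
      simpa using ((continuous_mul_const (u l r)).tendsto 0).mono_left nhdsWithin_le_nhds
    exact this.eventually (gt_mem_nhds (hpos l))
  obtain ⟨ε, hε, hε₀ : 0 < ε⟩ := (hsmall.and self_mem_nhdsWithin).exists
  set q : Pt m s := (p.1, update p.2 r (p.2 r + ε))
  have hslack : ∀ l, slack v u σ l q = slack v u σ l p - ε * u l r := fun l => by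
    simp only [q, slack, dot_update]; ring
  have hr₀ : 0 ≤ p.2 r := hp.1.2.2.1 r
  have hqT : q ∈ TSet v u σ := by
    refine ⟨fun l => ?_, hp.1.2.1, fun r' => ?_, fun h0 => ?_⟩
    · show 0 ≤ slack v u σ l q
      linarith [hslack l, hε l]
    · rcases eq_or_ne r' r with rfl | h
      · simp only [q, update_self]; linarith
      · simpa [q, update_of_ne h] using hp.1.2.2.1 r'
    · have := congrFun h0 r
      simp only [q, update_self, Pi.zero_apply] at this
      linarith
  refine hp.2 q (fun i => le_rfl) (fun r' => ?_) (fun e => ?_) hqT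
  · rcases eq_or_ne r' r with rfl | h
    · simp only [q, update_self]; linarith
    · simp [q, update_of_ne h]
  · have := congrFun (congrArg Prod.snd e) r
    simp only [q, update_self] at this
    linarith

lemma exists_isGreatest_output_ray [Nonempty (Fin L)] (hu : ∀ l r, 0 < u l r)
    (hxy : (x, y) ∈ TSet v u σ) {r : Fin s} (hr : 0 < y r) :
    ∃ φ, IsGreatest {c | (x, update y r (c * y r)) ∈ TSet v u σ} φ ∧ 1 ≤ φ ∧
      ∃ l, slack v u σ l (x, update y r (φ * y r)) = 0 := by
  obtain ⟨t, ht, l, hl⟩ := exists_forall_mul_le_iff (b := fun l => slack v u σ l (x, y))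
    fun l => mul_pos (hu l r) hr
  have ht₀ : 0 ≤ t := (ht 0).1 fun l => by simpa using slack_nonneg_of_mem_TSet hxy l
  refine ⟨1 + t, ⟨⟨fun l => ?_, hxy.2.1, fun r' => ?_, fun h0 => ?_⟩, fun c hc => ?_⟩,
    by linarith, l, ?_⟩
  · show 0 ≤ slack v u σ l _
    rw [slack_update_snd, add_sub_cancel_left]
    linarith [(ht t).2 le_rfl l]
  · rcases eq_or_ne r' r with rfl | h
    · simp only [update_self]; positivity
    · simpa [update_of_ne h] using hxy.2.2.1 r'
  · have := congrFun h0 r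
    simp only [update_self, Pi.zero_apply] at this
    nlinarith
  · have := (ht (c - 1)).1 fun l => by
      have := slack_nonneg_of_mem_TSet hc l
      rw [slack_update_snd] at this
      linarith
    linarith
  · rw [slack_update_snd, add_sub_cancel_left, hl, sub_self]

lemma exists_isLeast_input_ray [Nonempty (Fin L)] (hv : ∀ l i, 0 < v l i)
    (hxy : (x, y) ∈ TSet v u σ) {i : Fin m} (hi : 0 < x i) :
    ∃ θ, IsLeast {c | (update x i (c * x i), y) ∈ TSet v u σ} θ ∧
      (0 < θ → ∃ l, slack v u σ l (update x i (θ * x i), y) = 0) := by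
  obtain ⟨t, ht, l, hl⟩ := exists_forall_mul_le_iff (b := fun l => slack v u σ l (x, y))
    fun l => mul_pos (hv l i) hi
  refine ⟨max 0 (1 - t), ⟨⟨fun l => ?_, fun i' => ?_, hxy.2.2⟩, fun c hc => ?_⟩,
    fun hθ => ⟨l, ?_⟩⟩
  · show 0 ≤ slack v u σ l _
    rw [slack_update_fst]
    linarith [(ht (1 - max 0 (1 - t))).2 (by linarith [le_max_right 0 (1 - t)]) l]
  · rcases eq_or_ne i' i with rfl | h
    · simp only [update_self]; positivity
    · simpa [update_of_ne h] using hxy.2.1 i'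
  · have hc₀ : 0 ≤ c * x i := by simpa using hc.2.1 i
    have := (ht (1 - c)).1 fun l => by
      have := slack_nonneg_of_mem_TSet hc l
      rw [slack_update_fst] at this
      linarith
    exact max_le (nonneg_of_mul_nonneg_left hc₀ hi) (by linarith)
  · have ht₁ : 0 < 1 - t := (lt_max_iff.1 hθ).resolve_left (lt_irrefl 0)
    rw [max_eq_right ht₁.le, slack_update_fst, sub_sub_cancel, hl, sub_self]

lemma exists_snd_pos_of_mem_TSet (hxy : (x, y) ∈ TSet v u σ) : ∃ r, 0 < y r := by
  obtain ⟨r, hr⟩ := ne_iff.mp hxy.2.2.2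
  exact ⟨r, (hxy.2.2.1 r).lt_of_ne' hr⟩

lemma phiStar_spec [Nonempty (Fin L)] (hv : ∀ l i, 0 < v l i) (hu : ∀ l r, 0 < u l r)
    (hxy : (x, y) ∈ TSet v u σ) :
    1 ≤ phiStar v u σ x y ∧
      (∀ l r, (phiStar v u σ x y - 1) * (u l r * y r) ≤ slack v u σ l (x, y)) ∧
      ∃ r, (x, update y r (phiStar v u σ x y * y r)) ∈ strongF (TSet v u σ) := by
  choose! φ hφ hφ₁ hφl using fun r (hr : 0 < y r) => exists_isGreatest_output_ray hu hxy hr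
  obtain ⟨r₁, hr₁, hmin⟩ :=
    Set.exists_min_image {r | 0 < y r} φ (Set.toFinite _) (exists_snd_pos_of_mem_TSet hxy)
  have hφ_eq : phiStar v u σ x y = φ r₁ := by
    rw [phiStar, Set.image_congr (s := {r | 0 < y r}) fun r hr => (hφ r hr).csSup_eq]
    exact IsLeast.csInf_eq ⟨Set.mem_image_of_mem _ hr₁, Set.forall_mem_image.2 hmin⟩
  rw [hφ_eq]
  refine ⟨hφ₁ r₁ hr₁, fun l r => ?_, r₁, ?_⟩
  · rcases (show 0 ≤ y r from hxy.2.2.1 r).eq_or_lt' with hr | hr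
    · rw [hr, mul_zero, mul_zero]
      exact slack_nonneg_of_mem_TSet hxy l
    · have := slack_nonneg_of_mem_TSet (hφ r hr).1 l
      rw [slack_update_snd] at this
      nlinarith [hmin r hr, mul_pos (hu l r) hr]
  · obtain ⟨l, hl⟩ := hφl r₁ hr₁
    exact mem_strongF_of_slack_eq_zero hv hu (hφ r₁ hr₁).1 hl

lemma thetaStar_spec [Nonempty (Fin L)] (hv : ∀ l i, 0 < v l i) (hu : ∀ l r, 0 < u l r)
    (hxy : (x, y) ∈ TSet v u σ) (hx : ¬ ∀ i, x i = 0) :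
    thetaStar v u σ x y ≤ 1 ∧
      (∀ l i, (1 - thetaStar v u σ x y) * (v l i * x i) ≤ slack v u σ l (x, y)) ∧
      (0 < thetaStar v u σ x y →
        ∃ i, (update x i (thetaStar v u σ x y * x i), y) ∈ strongF (TSet v u σ)) := by
  choose! θ hθ hθl using fun i (hi : 0 < x i) => exists_isLeast_input_ray hv hxy hi
  have hx₀ : ∃ i, 0 < x i := by
    obtain ⟨i, hi⟩ := not_forall.1 hx
    exact ⟨i, (hxy.2.1 i).lt_of_ne' hi⟩
  obtain ⟨i₁, hi₁, hmax⟩ := Set.exists_max_image {i | 0 < x i} θ (Set.toFinite _) hx₀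
  have hθ_eq : thetaStar v u σ x y = θ i₁ := by
    rw [thetaStar, if_neg hx,
      Set.image_congr (s := {i | 0 < x i}) fun i hi => (hθ i hi).csInf_eq]
    exact IsGreatest.csSup_eq ⟨Set.mem_image_of_mem _ hi₁, Set.forall_mem_image.2 hmax⟩
  rw [hθ_eq]
  refine ⟨(hθ i₁ hi₁).2 (by simpa using hxy), fun l i => ?_, fun hpos => ?_⟩
  · rcases (show 0 ≤ x i from hxy.2.1 i).eq_or_lt' with hi | hi
    · rw [hi, mul_zero, mul_zero]
      exact slack_nonneg_of_mem_TSet hxy l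
    · have := slack_nonneg_of_mem_TSet (hθ i hi).1 l
      rw [slack_update_fst] at this
      nlinarith [hmax i hi, mul_pos (hv l i) hi]
  · obtain ⟨l, hl⟩ := hθl i₁ hi₁ hpos
    exact ⟨i₁, mem_strongF_of_slack_eq_zero hv hu (hθ i₁ hi₁).1 hl⟩

lemma one_sub_thetaStar_mul_le [Nonempty (Fin L)] (hv : ∀ l i, 0 < v l i)
    (hu : ∀ l r, 0 < u l r) (hxy : (x, y) ∈ TSet v u σ) (l : Fin L) (i : Fin m) :
    (1 - thetaStar v u σ x y) * (v l i * x i) ≤ slack v u σ l (x, y) := by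
  by_cases hx : ∀ i, x i = 0
  · rw [hx i, mul_zero, mul_zero]
    exact slack_nonneg_of_mem_TSet hxy l
  · exact (thetaStar_spec hv hu hxy hx).2.1 l i

def russellScores (v : Fin L → Fin m → ℝ) (u : Fin L → Fin s → ℝ) (σ : Fin L → ℝ)
    (x : Fin m → ℝ) (y : Fin s → ℝ) : Set ℝ :=
  {t : ℝ | ∃ (θ : Fin m → ℝ) (φ : Fin s → ℝ),
    (∀ i, 0 ≤ θ i ∧ θ i ≤ 1) ∧ (∀ r, 1 ≤ φ r) ∧
    ((fun i => θ i * x i), (fun r => φ r * y r)) ∈ strongF (TSet v u σ) ∧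
    t = (1 / (m + s : ℝ)) * ((∑ i, θ i) + ∑ r, 1 / φ r)}

lemma sum_add_sum_one_div_le (hv : ∀ l i, 0 < v l i) (hu : ∀ l r, 0 < u l r)
    (hxy : (x, y) ∈ TSet v u σ) {θ : Fin m → ℝ} {φ : Fin s → ℝ} (hθ : ∀ i, θ i ≤ 1)
    (hφ : ∀ r, 1 ≤ φ r)
    (heff : ((fun i => θ i * x i), (fun r => φ r * y r)) ∈ strongF (TSet v u σ)) :
    ∑ i, θ i + ∑ r, 1 / φ r
      ≤ (m + s : ℝ) - 1 + max (thetaStar v u σ x y) (1 / phiStar v u σ x y) := by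
  obtain ⟨l, hl⟩ := exists_slack_eq_zero_of_mem_strongF heff
  have : Nonempty (Fin L) := ⟨l⟩
  obtain ⟨hφ₁, hφS, -⟩ := phiStar_spec hv hu hxy
  have hφ₀ : 0 < phiStar v u σ x y := zero_lt_one.trans_le hφ₁
  set M := max (thetaStar v u σ x y) (1 / phiStar v u σ x y)
  obtain ⟨r₀, hr₀⟩ := exists_snd_pos_of_mem_TSet hxy
  have hS := slack_eq_sum_add_slack (v := v) (u := u) (σ := σ) (x := x) (y := y) l θ φ
  rw [hl, add_zero] at hS
  have hM : 0 < M := (one_div_pos.2 hφ₀).trans_le (le_max_right _ _)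
  have key := one_sub_le_sum_one_sub ⟨r₀, mul_pos (hu l r₀) hr₀⟩ hθ hφ hM hS.symm
    (fun i => ?_) (fun r => ?_)
  · simp only [Finset.sum_sub_distrib, Finset.sum_const, Finset.card_univ, Fintype.card_fin,
      nsmul_eq_mul, mul_one] at key
    linarith
  · have hθM : thetaStar v u σ x y ≤ M := le_max_left _ _
    calc v l i * x i * (1 - M) ≤ v l i * x i * (1 - thetaStar v u σ x y) :=
          mul_le_mul_of_nonneg_left (by linarith) (mul_nonneg (hv l i).le (hxy.2.1 i))
      _ ≤ slack v u σ l (x, y) := by linarith [one_sub_thetaStar_mul_le hv hu hxy l i]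
  · have hMφ : 1 ≤ M * phiStar v u σ x y := (div_le_iff₀ hφ₀).1 (le_max_right _ _)
    calc u l r * y r * (1 - M) ≤ u l r * y r * (M * phiStar v u σ x y - M) :=
          mul_le_mul_of_nonneg_left (by linarith) (mul_nonneg (hu l r).le (hxy.2.2.1 r))
      _ = M * ((phiStar v u σ x y - 1) * (u l r * y r)) := by ring
      _ ≤ M * slack v u σ l (x, y) := mul_le_mul_of_nonneg_left (hφS l r) hM.le

lemma le_max_of_mem_russellScores (hv : ∀ l i, 0 < v l i) (hu : ∀ l r, 0 < u l r)
    (hxy : (x, y) ∈ TSet v u σ) {t : ℝ} (ht : t ∈ russellScores v u σ x y) :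
    t ≤ max (((m + s : ℝ) - 1 + thetaStar v u σ x y) / (m + s : ℝ))
      (((m + s : ℝ) - 1 + 1 / phiStar v u σ x y) / (m + s : ℝ)) := by
  obtain ⟨θ, φ, hθ, hφ, heff, rfl⟩ := ht
  rw [max_div_div_right (by positivity), max_add_add_left, one_div_mul_eq_div]
  exact div_le_div_of_nonneg_right
    (sum_add_sum_one_div_le hv hu hxy (fun i => (hθ i).2) hφ heff) (by positivity)

lemma phiStar_candidate_mem_russellScores [Nonempty (Fin L)] (hv : ∀ l i, 0 < v l i)
    (hu : ∀ l r, 0 < u l r) (hxy : (x, y) ∈ TSet v u σ) :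
    ((m + s : ℝ) - 1 + 1 / phiStar v u σ x y) / (m + s : ℝ) ∈ russellScores v u σ x y := by
  obtain ⟨hφ₁, -, r, hr⟩ := phiStar_spec hv hu hxy
  refine ⟨1, update 1 r (phiStar v u σ x y), fun i => ⟨zero_le_one, le_rfl⟩, fun r' => ?_, ?_, ?_⟩
  · rcases eq_or_ne r' r with rfl | h
    · simpa using hφ₁
    · simp [update_of_ne h]
  · simpa only [Pi.one_apply, one_mul, update_one_mul] using hr
  · have hsum := sum_update_one (fun c : ℝ => 1 / c) r (phiStar v u σ x y)
    simp only [hsum, Pi.one_apply, Finset.sum_const, Finset.card_univ, Fintype.card_fin,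
      nsmul_eq_mul, mul_one, div_one, one_div_mul_eq_div]
    ring

lemma exists_mem_russellScores_thetaStar_candidate_le [Nonempty (Fin L)]
    (hv : ∀ l i, 0 < v l i) (hu : ∀ l r, 0 < u l r) (hxy : (x, y) ∈ TSet v u σ) :
    ∃ t ∈ russellScores v u σ x y,
      ((m + s : ℝ) - 1 + thetaStar v u σ x y) / (m + s : ℝ) ≤ t := by
  have hφ := phiStar_candidate_mem_russellScores hv hu hxy
  by_cases hx : ∀ i, x i = 0
  · exact ⟨_, hφ, by rw [thetaStar, if_pos hx]⟩
  obtain ⟨hθ₁, -, hθ⟩ := thetaStar_spec hv hu hxy hx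
  rcases lt_or_ge 0 (thetaStar v u σ x y) with hθ₀ | hθ₀
  · obtain ⟨i, hi⟩ := hθ hθ₀
    refine ⟨_, ⟨update 1 i (thetaStar v u σ x y), 1, fun i' => ?_, fun r => le_rfl, ?_, rfl⟩,
      le_of_eq ?_⟩
    · rcases eq_or_ne i' i with rfl | h
      · simpa using ⟨hθ₀.le, hθ₁⟩
      · simp [update_of_ne h]
    · simpa only [Pi.one_apply, one_mul, update_one_mul] using hi
    · have hsum := sum_update_one id i (thetaStar v u σ x y)
      simp only [id] at hsum
      simp only [hsum, Pi.one_apply, Finset.sum_const, Finset.card_univ, Fintype.card_fin,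
        nsmul_eq_mul, mul_one, div_one, one_div_mul_eq_div]
      ring
  · have := one_div_pos.2 (zero_lt_one.trans_le (phiStar_spec hv hu hxy).1)
    exact ⟨_, hφ, div_le_div_of_nonneg_right (by linarith) (by positivity)⟩

end TechnologySet

theorem stmt11_general {m s L : ℕ}
    (v : Fin L → Fin m → ℝ) (u : Fin L → Fin s → ℝ) (σ : Fin L → ℝ)
    (hpos : ∀ l, (∀ i, 0 < v l i) ∧ (∀ r, 0 < u l r))
    (x : Fin m → ℝ) (y : Fin s → ℝ) (hxy : (x, y) ∈ TSet v u σ)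
    (F : ℝ)
    (hF : IsGreatest {t : ℝ | ∃ (θ : Fin m → ℝ) (φ : Fin s → ℝ),
        (∀ i, 0 ≤ θ i ∧ θ i ≤ 1) ∧ (∀ r, 1 ≤ φ r) ∧
        ((fun i => θ i * x i), (fun r => φ r * y r)) ∈ strongF (TSet v u σ) ∧
        t = (1 / (m + s : ℝ)) * ((∑ i, θ i) + ∑ r, 1 / φ r)} F) :
    F = max (((m + s : ℝ) - 1 + thetaStar v u σ x y) / (m + s : ℝ))
            (((m + s : ℝ) - 1 + 1 / phiStar v u σ x y) / (m + s : ℝ)) := by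
  have hv : ∀ l i, 0 < v l i := fun l => (hpos l).1
  have hu : ∀ l r, 0 < u l r := fun l => (hpos l).2
  obtain ⟨θ, φ, -, -, heff, -⟩ := hF.1
  obtain ⟨l, -⟩ := exists_slack_eq_zero_of_mem_strongF heff
  have : Nonempty (Fin L) := ⟨l⟩
  obtain ⟨t, ht, hθt⟩ := exists_mem_russellScores_thetaStar_candidate_le hv hu hxy
  exact le_antisymm (le_max_of_mem_russellScores hv hu hxy hF.1)
    (max_le (hθt.trans (hF.2 ht)) (hF.2 (phiStar_candidate_mem_russellScores hv hu hxy)))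

/-- closed form of the extended max Russell graph measure via
`m+s` one-dimensional (LP) problems. -/
theorem stmt11 {m s L : ℕ} (hms : 0 < m + s)
    (v : Fin L → Fin m → ℝ) (u : Fin L → Fin s → ℝ) (σ : Fin L → ℝ)
    (hpos : ∀ l, (∀ i, 0 < v l i) ∧ (∀ r, 0 < u l r))
    (hσ : ∀ l, ∃ p ∈ polyP v u σ, dot (v l) p.1 - dot (u l) p.2 = σ l)
    (hPfront : strongF (polyP v u σ) = weakF (polyP v u σ))
    (x : Fin m → ℝ) (y : Fin s → ℝ) (hxy : (x, y) ∈ TSet v u σ)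
    (F : ℝ)
    (hF : IsGreatest {t : ℝ | ∃ (θ : Fin m → ℝ) (φ : Fin s → ℝ),
        (∀ i, 0 ≤ θ i ∧ θ i ≤ 1) ∧ (∀ r, 1 ≤ φ r) ∧
        ((fun i => θ i * x i), (fun r => φ r * y r)) ∈ strongF (TSet v u σ) ∧
        t = (1 / (m + s : ℝ)) * ((∑ i, θ i) + ∑ r, 1 / φ r)} F) :
    F = max (((m + s : ℝ) - 1 + thetaStar v u σ x y) / (m + s : ℝ))
            (((m + s : ℝ) - 1 + 1 / phiStar v u σ x y) / (m + s : ℝ)) :=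
  stmt11_general v u σ hpos x y hxy F hF
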